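/- For α ∈ (1,2) and every integer j ≥ 1, the partial sum ∑_{k=0}^j (-1)^k (α choose k) is strictly negative. -/

import Mathlib

/-! Pascal's rule `(β + 1 choose k + 1) = (β choose k) + (β choose k + 1)` telescopes the partial
sum `∑_{k ≤ j} (-1)^k (β + 1 choose k)` to `(-1)^j (β choose j)`. For `β = α - 1 ∈ (0, 1)` we have
`(-1)^j β(β - 1)⋯(β - j + 1) = ∏_{i < j} (i - β)`, a product whose only negative factor is `-β`. -/

open Real Finset

noncomputable def gchoose (α : ℝ) (k : ℕ) : ℝ :=
  (∏ i ∈ Finset.range k, (α - i)) / (Nat.factorial k)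

noncomputable def gtilde (α : ℝ) (k : ℕ) : ℝ := (-1) ^ k * gchoose α k

open Polynomial in
theorem gchoose_eq_ringChoose (α : ℝ) (k : ℕ) : gchoose α k = Ring.choose α k := by
  rw [Ring.choose_eq_smul, ← aeval_eq_smeval, aeval_def, ← eval_map, descPochhammer_map,
    descPochhammer_eval_eq_prod_range, gchoose, smul_eq_mul, div_eq_inv_mul]

theorem gchoose_succ_succ (β : ℝ) (k : ℕ) :
    gchoose (β + 1) (k + 1) = gchoose β k + gchoose β (k + 1) := by
  simp only [gchoose_eq_ringChoose, Ring.choose_succ_succ]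

theorem sum_range_succ_gtilde_add_one (β : ℝ) (j : ℕ) :
    ∑ k ∈ range (j + 1), gtilde (β + 1) k = (-1) ^ j * gchoose β j := by
  induction j with
  | zero => simp [gtilde, gchoose]
  | succ j ih =>
    rw [sum_range_succ, ih, gtilde, gchoose_succ_succ]
    ring

theorem neg_one_pow_mul_gchoose_neg {β : ℝ} (hβ₀ : 0 < β) (hβ₁ : β < 1) {j : ℕ} (hj : 1 ≤ j) :
    (-1) ^ j * gchoose β j < 0 := by
  obtain ⟨j, rfl⟩ := Nat.exists_eq_add_of_le' hj
  have hsign : (-1) ^ (j + 1) * ∏ i ∈ range (j + 1), (β - i) = ∏ i ∈ range (j + 1), (i - β) := by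
    simpa only [neg_sub, card_range] using (prod_neg (s := range (j + 1)) fun i : ℕ => β - i).symm
  have hpos : 0 < ∏ i ∈ range j, ((i + 1 : ℕ) - β) :=
    prod_pos fun i _ => by push_cast; linarith [(i.cast_nonneg : (0 : ℝ) ≤ i)]
  rw [gchoose, ← mul_div_assoc, hsign, prod_range_succ']
  apply div_neg_of_neg_of_pos _ (by positivity)
  simp only [Nat.cast_zero, zero_sub]
  exact mul_neg_of_pos_of_neg hpos (neg_neg_of_pos hβ₀)

theorem stmt_2 (α : ℝ) (hα : 1 < α ∧ α < 2) (j : ℕ) (hj : 1 ≤ j) :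
    ∑ k ∈ Finset.range (j + 1), gtilde α k < 0 := by
  obtain ⟨hα₁, hα₂⟩ := hα
  rw [← sub_add_cancel α 1, sum_range_succ_gtilde_add_one]
  exact neg_one_pow_mul_gchoose_neg (by linarith) (by linarith) hj
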